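/- T composed with the analogously-defined inverse chain map is the identity on A(n): defining T⁻¹ on the image of T by following the alternating chain in (π′, σ′) starting from man n (first an affair edge, then a marriage edge, alternating) and swapping statuses back, one recovers the original pair (π, σ). -/
import Mathlib


/- We work with `n + 2` people of each sex (so the number of people is at least 2),
men and women both indexed by `Fin (n+2)`; man `0` is "Mr. 1" and man `Fin.last (n+1)`
is "Mr. n", and similarly for women.

A pair `(π, σ)` of total permutations of `Fin (n+2)` encodes an element of one of the
sets `A(n)`, `B(n)`, `C(n)` of pairs (marriage matching, affair matching) of
Zeilberger's proof, via dummy values at the unused points: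
* `A(n)`: `π` is the marriage matching of all men to all women, and the affair
  matching `{2,…,n-1} → {2',…,(n-1)'}` is encoded by a permutation `σ` fixing the
  endpoints `0` and `last`.
* `B(n)`: the marriage matching `{1,…,n-1} → {1',…,(n-1)'}` is encoded by `π` with the
  dummy value `π last = last`, and the affair matching `{2,…,n} → {2',…,n'}` by `σ`
  with dummy value `σ 0 = 0`.
* `C(n)`: the marriage matching `{1,…,n-1} → {2',…,n'}` is encoded by `π` with dummy
  value `π last = 0`, and the affair matching `{2,…,n} → {1',…,(n-1)'}` by `σ` with
  dummy value `σ 0 = last`. -/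

/-- A pair (marriages, affairs) of permutations. -/
abbrev PairPerm (n : ℕ) := Equiv.Perm (Fin (n + 2)) × Equiv.Perm (Fin (n + 2))

/-- The last index (Mr./Ms. `n`). -/
def lastF (n : ℕ) : Fin (n + 2) := Fin.last (n + 1)

/-- The middle indices `{2,…,n-1}` (people having affairs in `A(n)`). -/
def middleF (n : ℕ) : Finset (Fin (n + 2)) := (Finset.univ.erase 0).erase (lastF n)

/-- Membership in `A(n)`: the affair permutation fixes the two endpoints. -/
def InA {n : ℕ} (p : PairPerm n) : Prop := p.2 0 = 0 ∧ p.2 (lastF n) = lastF n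

/-- Membership in `B(n)`: dummy marriage `n ↦ n'`, dummy affair `1 ↦ 1'`. -/
def InB {n : ℕ} (p : PairPerm n) : Prop := p.1 (lastF n) = lastF n ∧ p.2 0 = 0

/-- Membership in `C(n)`: dummy marriage `n ↦ 1'`, dummy affair `1 ↦ n'`. -/
def InC {n : ℕ} (p : PairPerm n) : Prop := p.1 (lastF n) = 0 ∧ p.2 0 = lastF n

/-- The alternating chain of men: `m 0 = n`, and `m (k+1)` is the lover of the wife of
`m k` (wife: apply `π`; lover: apply `σ⁻¹`). -/
def chainM {n : ℕ} (p : PairPerm n) : ℕ → Fin (n + 2)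
  | 0 => lastF n
  | k + 1 => p.2.symm (p.1 (chainM p k))

/-- The alternating chain of women: `w k` is the wife of `m k`. -/
def chainW {n : ℕ} (p : PairPerm n) (k : ℕ) : Fin (n + 2) := p.1 (chainM p k)

/-- `TStep p q` says that `q` is obtained from `p` by Zeilberger's map `T`: along the
alternating chain `m 0 = n, w 0, m 1, w 1, …` of `p`, which terminates at the first
woman `w (r-1) ∈ {1', n'}`, marriages `(m k, w k)` become affairs and affairs
`(m (k+1), w k)` become marriages; everything off the chain is unchanged, and the
dummy values are set according to whether the chain ended at `1'` or at `n'`. -/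
def TStep {n : ℕ} (p q : PairPerm n) : Prop :=
  ∃ r : ℕ, 1 ≤ r ∧
    (∀ k, k + 1 < r → chainW p k ≠ 0 ∧ chainW p k ≠ lastF n) ∧
    (chainW p (r - 1) = 0 ∨ chainW p (r - 1) = lastF n) ∧
    (∀ i, (∀ k, k < r → i ≠ chainM p k) → q.1 i = p.1 i) ∧
    (∀ i, i ≠ 0 → (∀ k, k < r → i ≠ chainM p k) → q.2 i = p.2 i) ∧
    (∀ k, k + 1 < r → q.1 (chainM p (k + 1)) = chainW p k) ∧
    q.1 (lastF n) = chainW p (r - 1) ∧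
    (∀ k, k < r → q.2 (chainM p k) = chainW p k) ∧
    q.2 0 = (if chainW p (r - 1) = 0 then lastF n else 0)

/-- The backward alternating chain in `q`, starting from man `n`: first follow the
affair edge (apply `σ'`), then the marriage edge backwards (apply `π'⁻¹`). -/
def bchain {n : ℕ} (q : PairPerm n) (k : ℕ) : Fin (n + 2) :=
  (fun x => q.1.symm (q.2 x))^[k] (lastF n)

/-- `UStep q p` says that `p` is obtained from `q` by the inverse map `T⁻¹`: follow the
backward alternating chain of `q` from man `n` (affair edge first, then marriage edge,
alternating) until it returns to man `n`, and swap affairs back to marriages and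
marriages back to affairs along it, restoring the dummy values of `A(n)`. -/
def UStep {n : ℕ} (q p : PairPerm n) : Prop :=
  ∃ r : ℕ, 1 ≤ r ∧
    bchain q r = lastF n ∧
    (∀ k, 1 ≤ k → k < r → bchain q k ≠ lastF n) ∧
    (∀ k, k < r → p.1 (bchain q k) = q.2 (bchain q k)) ∧
    (∀ k, 1 ≤ k → k < r → p.2 (bchain q k) = q.2 (bchain q (k - 1))) ∧
    (∀ i, (∀ k, k < r → i ≠ bchain q k) → p.1 i = q.1 i) ∧
    (∀ i, i ≠ 0 → (∀ k, k < r → i ≠ bchain q k) → p.2 i = q.2 i) ∧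
    p.2 0 = 0 ∧ p.2 (lastF n) = lastF n

/-- `T⁻¹ ∘ T` is the identity on `A(n)`: applying the backward chain swap to the image
of `(π, σ)` under `T` recovers `(π, σ)`. -/
theorem T_inverse_T {n : ℕ} (p q : PairPerm n) (hp : InA p) (h : TStep p q) :
    UStep q p := by
  obtain ⟨r, hr1, hmid, hend, hq1off, hq2off, hq1chain, hq1last, hq2chain, hq20⟩ := h
  have hb : ∀ k, k < r → bchain q k = chainM p k := by
    intro k hk
    induction k with
    | zero => rfl
    | succ k ih =>
      have hk' : k < r := Nat.lt_of_succ_lt hk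
      have hstep : bchain q (k+1) = q.1.symm (q.2 (bchain q k)) := by
        simp [bchain, Function.iterate_succ_apply']
      rw [hstep, ih hk', hq2chain k hk', Equiv.symm_apply_eq, hq1chain k hk]
  have hbr : bchain q r = lastF n := by
    have hstep : bchain q r = q.1.symm (q.2 (bchain q (r-1))) := by
      conv_lhs => rw [show r = (r-1) + 1 by omega]
      simp [bchain, Function.iterate_succ_apply']
    rw [hstep, hb (r-1) (by omega), hq2chain (r-1) (by omega),
      Equiv.symm_apply_eq, hq1last]
  have hmne : ∀ k, 1 ≤ k → k < r → chainM p k ≠ lastF n := by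
    intro k hk1 hkr heq
    rw [show k = (k-1) + 1 by omega] at heq
    have h2 : p.1 (chainM p (k-1)) = p.2 (lastF n) := by
      have := heq
      simp only [chainM, Equiv.symm_apply_eq] at this
      exact this
    rw [hp.2] at h2
    exact (hmid (k-1) (by omega)).2 h2
  refine ⟨r, hr1, hbr, ?_, ?_, ?_, ?_, ?_, hp.1, hp.2⟩
  · intro k hk1 hkr
    rw [hb k hkr]; exact hmne k hk1 hkr
  · intro k hkr
    rw [hb k hkr, hq2chain k hkr]; rfl
  · intro k hk1 hkr
    rw [hb k hkr, hb (k-1) (by omega), hq2chain (k-1) (by omega)]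
    conv_lhs => rw [show k = (k-1)+1 by omega]
    simp [chainM, chainW]
  · intro i hi
    exact (hq1off i (fun k hk hik => hi k hk (by rw [hb k hk]; exact hik))).symm
  · intro i h0 hi
    exact (hq2off i h0 (fun k hk hik => hi k hk (by rw [hb k hk]; exact hik))).symm
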